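/- Euler's first identity: for complex q, z with |q| < 1 and |z| < 1, ∑_{n=0}^∞ z^n / (q;q)_n = 1 / (z;q)_∞. -/

import Mathlib

/-!
Write `F(w) = ∑ wⁿ / (q;q)ₙ`. Since `(q;q)ₙ` tends to `(q;q)_∞ ≠ 0`, the coefficients
`1 / (q;q)ₙ` are bounded, so `F` converges on the unit disc and, by dominated convergence, is
continuous at `0` with `F(0) = 1`. Comparing coefficients gives `(1 - w) F(w) = F(wq)`; iterating,
`(z;q)_N F(z) = F(zq^N)`, and letting `N → ∞` yields `(z;q)_∞ F(z) = F(0) = 1`.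
-/

open Filter Topology

/-- Finite q-Pochhammer symbol: (a;q)_n = ∏_{k=0}^{n-1} (1 - a q^k). -/
noncomputable def qp (a q : ℂ) (n : ℕ) : ℂ := ∏ k ∈ Finset.range n, (1 - a * q ^ k)

/-- Infinite q-Pochhammer symbol: (a;q)_∞ = ∏_{k=0}^∞ (1 - a q^k). -/
noncomputable def qpInf (a q : ℂ) : ℂ := ∏' k : ℕ, (1 - a * q ^ k)

section QPochhammer

variable {a q : ℂ}

lemma qp_zero (a q : ℂ) : qp a q 0 = 1 := Finset.prod_range_zero _

lemma qp_succ (a q : ℂ) (n : ℕ) : qp a q (n + 1) = qp a q n * (1 - a * q ^ n) :=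
  Finset.prod_range_succ _ n

lemma norm_mul_pow_lt_one (ha : ‖a‖ < 1) (hq : ‖q‖ ≤ 1) (k : ℕ) :
    ‖a * q ^ k‖ < 1 := by
  rw [norm_mul, norm_pow]
  exact (mul_le_of_le_one_right (norm_nonneg a) (pow_le_one₀ (norm_nonneg q) hq)).trans_lt ha

lemma one_sub_mul_pow_ne_zero (ha : ‖a‖ < 1) (hq : ‖q‖ ≤ 1) (k : ℕ) :
    1 - a * q ^ k ≠ 0 := by
  refine sub_ne_zero.2 fun h => ?_
  have := norm_mul_pow_lt_one ha hq k
  rw [← h, norm_one] at this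
  exact this.false

lemma qp_ne_zero (ha : ‖a‖ < 1) (hq : ‖q‖ ≤ 1) (n : ℕ) : qp a q n ≠ 0 :=
  Finset.prod_ne_zero_iff.2 fun k _ => one_sub_mul_pow_ne_zero ha hq k

lemma summable_norm_neg_mul_pow (a : ℂ) (hq : ‖q‖ < 1) :
    Summable fun k : ℕ => ‖-(a * q ^ k)‖ := by
  simpa only [norm_neg, norm_mul, norm_pow] using
    (summable_geometric_of_lt_one (norm_nonneg q) hq).mul_left ‖a‖

lemma tendsto_qp_qpInf (a : ℂ) (hq : ‖q‖ < 1) :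
    Tendsto (qp a q) atTop (𝓝 (qpInf a q)) := by
  have h := multipliable_one_add_of_summable (summable_norm_neg_mul_pow a hq)
  simp only [← sub_eq_add_neg] at h
  exact h.hasProd.tendsto_prod_nat

lemma qpInf_ne_zero (ha : ‖a‖ < 1) (hq : ‖q‖ < 1) : qpInf a q ≠ 0 := by
  have h := tprod_one_add_ne_zero_of_summable
    (fun k => by simpa only [← sub_eq_add_neg] using one_sub_mul_pow_ne_zero ha hq.le k)
    (summable_norm_neg_mul_pow a hq)
  simpa only [qpInf, ← sub_eq_add_neg] using h

lemma exists_norm_inv_qp_le (hq : ‖q‖ < 1) : ∃ C, ∀ n, ‖(qp q q n)⁻¹‖ ≤ C := by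
  obtain ⟨C, hC⟩ := (Metric.isBounded_range_of_tendsto _
    ((tendsto_qp_qpInf q hq).inv₀ (qpInf_ne_zero hq hq))).exists_norm_le
  exact ⟨C, fun n => hC _ ⟨n, rfl⟩⟩

end QPochhammer

noncomputable def eulerSum (q w : ℂ) : ℂ := ∑' n : ℕ, w ^ n / qp q q n

section EulerSum

variable {q w : ℂ}

lemma norm_div_qp_le {C : ℝ} (hC : ∀ n, ‖(qp q q n)⁻¹‖ ≤ C) (n : ℕ) :
    ‖w ^ n / qp q q n‖ ≤ C * ‖w‖ ^ n := by
  rw [div_eq_mul_inv, norm_mul, norm_pow, mul_comm]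
  exact mul_le_mul_of_nonneg_right (hC n) (by positivity)

lemma summable_pow_div_qp (hq : ‖q‖ < 1) (hw : ‖w‖ < 1) :
    Summable fun n : ℕ => w ^ n / qp q q n := by
  obtain ⟨C, hC⟩ := exists_norm_inv_qp_le hq
  exact .of_norm_bounded ((summable_geometric_of_lt_one (norm_nonneg w) hw).mul_left C)
    (norm_div_qp_le hC)

lemma pow_succ_div_qp_sub (hq : ‖q‖ < 1) (n : ℕ) :
    w ^ (n + 1) / qp q q (n + 1) - (w * q) ^ (n + 1) / qp q q (n + 1) =
      w * (w ^ n / qp q q n) := by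
  have hqn := qp_ne_zero hq hq.le (n + 1)
  rw [qp_succ] at hqn ⊢
  have := right_ne_zero_of_mul hqn
  field_simp
  ring

lemma one_sub_mul_eulerSum (hq : ‖q‖ < 1) (hw : ‖w‖ < 1) :
    (1 - w) * eulerSum q w = eulerSum q (w * q) := by
  have hwq : ‖w * q‖ < 1 := by simpa only [pow_one] using norm_mul_pow_lt_one hw hq.le 1
  have hdiff := (summable_pow_div_qp hq hw).sub (summable_pow_div_qp hq hwq)
  have key : eulerSum q w - eulerSum q (w * q) = w * eulerSum q w := by
    rw [eulerSum, eulerSum, ← Summable.tsum_sub (summable_pow_div_qp hq hw)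
      (summable_pow_div_qp hq hwq), hdiff.tsum_eq_zero_add]
    simp only [pow_zero, sub_self, zero_add, pow_succ_div_qp_sub hq, tsum_mul_left]
  linear_combination key

lemma qp_mul_eulerSum (hq : ‖q‖ < 1) {z : ℂ} (hz : ‖z‖ < 1) (N : ℕ) :
    qp z q N * eulerSum q z = eulerSum q (z * q ^ N) := by
  induction N with
  | zero => rw [qp_zero, one_mul, pow_zero, mul_one]
  | succ N ih =>
    rw [qp_succ, mul_right_comm, ih, mul_comm,
      one_sub_mul_eulerSum hq (norm_mul_pow_lt_one hz hq.le N), mul_assoc, ← pow_succ]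

lemma tendsto_eulerSum_nhds_zero (hq : ‖q‖ < 1) : Tendsto (eulerSum q) (𝓝 0) (𝓝 1) := by
  obtain ⟨C, hC⟩ := exists_norm_inv_qp_le hq
  have hC0 : 0 ≤ C := (norm_nonneg _).trans (hC 0)
  have hsmall : ∀ᶠ w : ℂ in 𝓝 0, ‖w‖ ≤ 2⁻¹ := by
    filter_upwards [Metric.closedBall_mem_nhds (0 : ℂ) (by norm_num : (0 : ℝ) < 2⁻¹)]
      with w hw using mem_closedBall_zero_iff.1 hw
  have hlim := tendsto_tsum_of_dominated_convergence (f := fun w (n : ℕ) => w ^ n / qp q q n)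
    (bound := fun n => C * 2⁻¹ ^ n)
    ((summable_geometric_of_lt_one (by norm_num) (by norm_num)).mul_left C)
    (fun n => ((continuous_pow n).div_const _).tendsto 0)
    (hsmall.mono fun w hw n => (norm_div_qp_le hC n).trans (by gcongr))
  rwa [tsum_eq_single 0 fun n hn => by rw [zero_pow hn, zero_div], pow_zero, qp_zero,
    div_one] at hlim

end EulerSum

/-- Euler's first identity. -/
theorem euler_first_identity (q z : ℂ) (hq : ‖q‖ < 1) (hz : ‖z‖ < 1) :
    HasSum (fun n : ℕ => z ^ n / qp q q n) (1 / qpInf z q) := by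
  have hshift : Tendsto (fun N : ℕ => z * q ^ N) atTop (𝓝 0) := by
    simpa only [mul_zero] using (tendsto_pow_atTop_nhds_zero_of_norm_lt_one hq).const_mul z
  have hlim : Tendsto (fun N => qp z q N * eulerSum q z) atTop (𝓝 1) := by
    simp only [qp_mul_eulerSum hq hz]
    exact (tendsto_eulerSum_nhds_zero hq).comp hshift
  have hinv : qpInf z q * eulerSum q z = 1 :=
    tendsto_nhds_unique ((tendsto_qp_qpInf z hq).mul_const _) hlim
  rw [one_div, inv_eq_of_mul_eq_one_right hinv]
  exact (summable_pow_div_qp hq hz).hasSum
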